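/- Let X be a real Banach space, let F be a dense ℚ-linear subspace of X, and let H and I be ℚ-linear subspaces of F with F = H ⊕ I. Let S : F → F be the ℚ-linear projection with image H and kernel I. Then the following are equivalent: (i) S is continuous (with respect to the norm of X); (ii) X = cl H ⊕ cl I, i.e., every element of X is uniquely the sum of an element of the closure of H in X and an element of the closure of I in X. -/

import Mathlib

/-!
If `S` is continuous, it extends by density and completeness to a continuous idempotent `P` on
`X`. The range and kernel of `P` are closed and are the closures of those of `S`, so
`X = range P ⊕ ker P` is the required decomposition. Conversely, if `X = cl H ⊕ cl I`, both
summands are closed, so by the closed graph theorem the projection onto `cl H` along `cl I` is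
continuous, and it restricts to `S` on `F`. All of this happens over `ℚ`, for which the norm of
`X` is a normed-space norm.
-/

open LinearMap (range ker)

/-- Unlike `NormedSpace.restrictScalars`, this keeps the given `Module 𝕜 E` instance. -/
abbrev NormedSpace.ofIsScalarTower (𝕜 𝕜' E : Type*) [NormedField 𝕜] [NormedField 𝕜']
    [NormedAlgebra 𝕜 𝕜'] [SeminormedAddCommGroup E] [NormedSpace 𝕜' E] [Module 𝕜 E]
    [IsScalarTower 𝕜 𝕜' E] : NormedSpace 𝕜 E where
  norm_smul_le c x := by
    rw [← algebraMap_smul 𝕜' c x, norm_smul, norm_algebraMap']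

namespace Submodule

theorem forall_existsUnique_add_iff_isCompl {R M : Type*} [Ring R] [AddCommGroup M] [Module R M]
    {A B : Submodule R M} :
    (∀ x : M, ∃! p : M × M, p.1 ∈ A ∧ p.2 ∈ B ∧ x = p.1 + p.2) ↔ IsCompl A B := by
  constructor
  · intro h
    refine ⟨disjoint_def.mpr fun a haA haB => ?_,
      codisjoint_iff.mpr (eq_top_iff.mpr fun x _ => ?_)⟩
    · obtain ⟨p, -, huniq⟩ := h a
      have h₁ := huniq (a, 0) ⟨haA, B.zero_mem, (add_zero a).symm⟩
      have h₂ := huniq (0, a) ⟨A.zero_mem, haB, (zero_add a).symm⟩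
      exact congrArg Prod.snd (h₂.trans h₁.symm)
    · obtain ⟨p, ⟨hpA, hpB, rfl⟩, -⟩ := h x
      exact add_mem_sup hpA hpB
  · intro h x
    obtain ⟨a, b, hab, huniq⟩ := existsUnique_add_of_isCompl h x
    refine ⟨(a, b), ⟨a.2, b.2, hab.symm⟩, fun p ⟨hpA, hpB, hx⟩ => ?_⟩
    obtain ⟨ha, hb⟩ := huniq ⟨p.1, hpA⟩ ⟨p.2, hpB⟩ hx.symm
    exact Prod.ext (congrArg Subtype.val ha) (congrArg Subtype.val hb)

end Submodule

section Extension

variable {𝕜 X : Type*} [Ring 𝕜] [TopologicalSpace X] [AddCommGroup X] [Module 𝕜 X]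
  [T2Space X] [IsTopologicalAddGroup X] [ContinuousConstSMul 𝕜 X]
  {F : Submodule 𝕜 X} {S : F →ₗ[𝕜] F} {P : X →L[𝕜] X}

theorem topologicalClosure_map_range_eq_range (hF : Dense (F : Set X)) (hP : IsIdempotentElem P)
    (hPS : ∀ f : F, P f = S f) :
    ((range S).map F.subtype).topologicalClosure = range (P : X →ₗ[𝕜] X) := by
  apply SetLike.coe_injective
  have hPι : P ∘ (↑) = (↑) ∘ S := funext hPS
  have hclosed : IsClosed (range (P : X →ₗ[𝕜] X) : Set X) :=
    (ContinuousLinearMap.IsIdempotentElem.isTopCompl hP).isClosed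
  rw [Submodule.topologicalClosure_coe, Submodule.map_coe, LinearMap.coe_range, ← Set.range_comp]
  apply subset_antisymm
  · refine closure_minimal ?_ hclosed
    rw [Submodule.coe_subtype, ← hPι, Set.range_comp]
    exact Set.image_subset_range _ _
  · rw [LinearMap.coe_range, ContinuousLinearMap.coe_coe, ← Set.image_univ, ← hF.closure_eq]
    refine (image_closure_subset_closure_image P.continuous).trans (closure_mono ?_)
    rw [Set.image_eq_range, Submodule.coe_subtype]
    exact (congrArg Set.range hPι).le

theorem topologicalClosure_map_ker_eq_ker (hF : Dense (F : Set X)) (hS : IsIdempotentElem S)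
    (hP : IsIdempotentElem P) (hPS : ∀ f : F, P f = S f) :
    ((ker S).map F.subtype).topologicalClosure = ker (P : X →ₗ[𝕜] X) := by
  rw [LinearMap.IsIdempotentElem.ker_eq_range_one_sub hS,
    LinearMap.IsIdempotentElem.ker_eq_range_one_sub
      (ContinuousLinearMap.IsIdempotentElem.toLinearMap hP)]
  exact topologicalClosure_map_range_eq_range hF hP.one_sub fun f => by simp [hPS]

end Extension

section Banach

variable {𝕜 X : Type*} [NontriviallyNormedField 𝕜] [NormedAddCommGroup X] [NormedSpace 𝕜 X]
  [CompleteSpace X] {F : Submodule 𝕜 X} {S : F →ₗ[𝕜] F}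

theorem isCompl_topologicalClosure_of_continuous (hF : Dense (F : Set X))
    (hS : IsIdempotentElem S) (hcont : Continuous S) :
    IsCompl ((range S).map F.subtype).topologicalClosure
      ((ker S).map F.subtype).topologicalClosure := by
  let P : X →L[𝕜] X := (F.subtypeL.comp ⟨S, hcont⟩).extend F.subtypeL
  have hPS : ∀ f : F, P f = S f :=
    ContinuousLinearMap.extend_eq _ hF.denseRange_val (isUniformInducing_val _)
  have hP : IsIdempotentElem P := by
    refine ContinuousLinearMap.coeFn_injective (hF.denseRange_val.equalizer (P * P).continuous
      P.continuous (funext fun f => ?_))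
    simp only [Function.comp_apply, mul_apply_eq_comp, hPS]
    exact congrArg Subtype.val (LinearMap.congr_fun hS f)
  rw [topologicalClosure_map_range_eq_range hF hP hPS,
    topologicalClosure_map_ker_eq_ker hF hS hP hPS]
  exact LinearMap.IsIdempotentElem.isCompl (ContinuousLinearMap.IsIdempotentElem.toLinearMap hP)

theorem continuous_of_isCompl_topologicalClosure (hS : IsIdempotentElem S)
    (h : IsCompl ((range S).map F.subtype).topologicalClosure
      ((ker S).map F.subtype).topologicalClosure) : Continuous S := by
  have hPS : ∀ f : F, Submodule.projection _ _ h f = S f := by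
    intro f
    have hker : f - S f ∈ ker S :=
      LinearMap.IsIdempotentElem.ker_eq_range_one_sub hS ▸ LinearMap.mem_range_self (1 - S) f
    have hf : (f : X) = S f + (f - S f : F) := by simp
    rw [hf, map_add, Submodule.projection_apply_of_mem_left h (x := ((S f : F) : X))
      (Submodule.le_topologicalClosure _ (Submodule.mem_map_of_mem (LinearMap.mem_range_self S f))),
      Submodule.projection_apply_of_mem_right h (x := ((f - S f : F) : X))
      (Submodule.le_topologicalClosure _ (Submodule.mem_map_of_mem hker)), add_zero]
  have hP := (Submodule.IsCompl.isTopCompl_of_isClosed h (Submodule.isClosed_topologicalClosure _)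
    (Submodule.isClosed_topologicalClosure _)).continuous_projection
  rw [Topology.IsInducing.subtypeVal.continuous_iff]
  exact (hP.comp continuous_subtype_val).congr hPS

end Banach

theorem stmt12 {X : Type*} [NormedAddCommGroup X] [NormedSpace ℝ X] [CompleteSpace X]
    [Module ℚ X] [IsScalarTower ℚ ℝ X]
    (F : Submodule ℚ X) (hF : Dense (F : Set X))
    (H I : Submodule ℚ ↥F)
    (S : ↥F →ₗ[ℚ] ↥F) (hp : S ∘ₗ S = S)
    (hr : LinearMap.range S = H) (hk : LinearMap.ker S = I) :
    Continuous S ↔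
      ∀ x : X, ∃! p : X × X,
        p.1 ∈ closure ((fun y : ↥F => (y : X)) '' (H : Set ↥F)) ∧
        p.2 ∈ closure ((fun y : ↥F => (y : X)) '' (I : Set ↥F)) ∧
        x = p.1 + p.2 := by
  let _ : NormedSpace ℚ X := .ofIsScalarTower ℚ ℝ X
  subst hr hk
  have hS : IsIdempotentElem S := hp
  have hclosure (K : Submodule ℚ F) :
      closure ((fun y : ↥F => (y : X)) '' (K : Set ↥F)) =
        (K.map F.subtype).topologicalClosure := by
    rw [Submodule.topologicalClosure_coe, Submodule.map_coe]
    rfl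
  simp only [hclosure, SetLike.mem_coe, Submodule.forall_existsUnique_add_iff_isCompl]
  exact ⟨isCompl_topologicalClosure_of_continuous hF hS,
    continuous_of_isCompl_topologicalClosure hS⟩
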